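/- arXiv:1710.11164 — 3 statements merged into one kernel-verified Lean document; each statement's English description precedes it below -/
import Mathlib

section
/- Let S be a semigroup acting by continuous maps on a metric space X. If the action is point transitive (some point has dense orbit) and the set of minimal points is dense in X, then the action is topologically transitive: for any nonempty open sets U, V there exists s ∈ S with Φ_s(U) ∩ V ≠ ∅. -/
def sgOrbit {S X : Type*} (Φ : S → X → X) (x : X) : Set X :=
  Set.range fun s => Φ s x

/-- `x` is a minimal point for the action `Φ`. -/
def IsMinimalPoint {S X : Type*} [MetricSpace X] (Φ : S → X → X) (x : X) : Prop :=
  IsCompact (closure (sgOrbit Φ x)) ∧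
    ∀ y ∈ closure (sgOrbit Φ x),
      closure (sgOrbit Φ y) = closure (sgOrbit Φ x)

theorem stmt_3 {S X : Type*} [Semigroup S] [MetricSpace X]
    (Φ : S → X → X) (hcont : ∀ s, Continuous (Φ s))
    (haction : ∀ s t : S, Φ (s * t) = Φ s ∘ Φ t)
    (hPT : ∃ x : X, Dense (sgOrbit Φ x))
    (hM : Dense {x : X | IsMinimalPoint Φ x}) :
    ∀ U V : Set X, IsOpen U → IsOpen V → U.Nonempty → V.Nonempty →
      ∃ s : S, ((Φ s '' U) ∩ V).Nonempty := by
  intro U V hU hV hUne hVne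
  obtain ⟨x₀, hx₀⟩ := hPT
  obtain ⟨pU, hpUorb, hpUmem⟩ := hx₀.exists_mem_open hU hUne
  obtain ⟨t, rfl⟩ := hpUorb
  obtain ⟨pV, hpVorb, hpVmem⟩ := hx₀.exists_mem_open hV hVne
  obtain ⟨r, rfl⟩ := hpVorb
  have hNopen : IsOpen (Φ t ⁻¹' U ∩ Φ r ⁻¹' V) :=
    ((hU.preimage (hcont t)).inter (hV.preimage (hcont r)))
  have hNne : (Φ t ⁻¹' U ∩ Φ r ⁻¹' V).Nonempty := ⟨x₀, hpUmem, hpVmem⟩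
  obtain ⟨m, hmMin, hmU, hmV⟩ := hM.exists_mem_open hNopen hNne
  have hy : Φ t m ∈ closure (sgOrbit Φ m) := subset_closure ⟨t, rfl⟩
  have hcl : closure (sgOrbit Φ (Φ t m)) = closure (sgOrbit Φ m) := hmMin.2 _ hy
  have hr : Φ r m ∈ closure (sgOrbit Φ (Φ t m)) := by
    rw [hcl]; exact subset_closure ⟨r, rfl⟩
  obtain ⟨z, hzV, hzOrb⟩ := _root_.mem_closure_iff.mp hr V hV hmV
  obtain ⟨s, rfl⟩ := hzOrb
  exact ⟨s, Φ s (Φ t m), ⟨Φ t m, hmU, rfl⟩, hzV⟩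
end

section
/- Let S be a semigroup acting by continuous maps on a metric space X. Assume the set of transitive points is dense (DPT), the system is non-minimal, and the set of minimal points is dense. Then the system has sensitive dependence on initial conditions: there exists ε > 0 such that for all x ∈ X and δ > 0 there are y ∈ B(x,δ) and s ∈ S with d(Φ_s(x), Φ_s(y)) > ε. -/
theorem stmt_5 {S X : Type*} [Semigroup S] [MetricSpace X]
    (Φ : S → X → X) (hcont : ∀ s, Continuous (Φ s))
    (haction : ∀ s t : S, Φ (s * t) = Φ s ∘ Φ t)
    (hDPT : Dense {x : X | Dense (sgOrbit Φ x)})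
    (hnonmin : ¬ ∃ x : X, IsMinimalPoint Φ x ∧ Dense (sgOrbit Φ x))
    (hM : Dense {x : X | IsMinimalPoint Φ x}) :
    ∃ ε > 0, ∀ x : X, ∀ δ > 0, ∃ y ∈ Metric.ball x δ,
      ∃ s : S, dist (Φ s x) (Φ s y) > ε := by
  by_cases hX : Nonempty X
  swap
  · exact ⟨1, one_pos, fun x => absurd ⟨x⟩ hX⟩
  -- S is nonempty (there is a transitive point, whose orbit is dense hence nonempty)
  obtain ⟨z0, hz0⟩ := hDPT.nonempty
  have hSne : Nonempty S := by
    obtain ⟨-, s, -⟩ := (hz0 : Dense (sgOrbit Φ z0)).nonempty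
    exact ⟨s⟩
  -- a minimal point p0, with proper minimal orbit closure A
  obtain ⟨p0, hp0⟩ := hM.nonempty
  set A := closure (sgOrbit Φ p0) with hA
  have hAne : A.Nonempty := ⟨Φ (Classical.arbitrary S) p0, subset_closure ⟨_, rfl⟩⟩
  have hAuniv : A ≠ Set.univ := by
    intro h
    exact hnonmin ⟨p0, hp0, by rw [dense_iff_closure_eq]; exact h⟩
  obtain ⟨x₀, hx₀⟩ := (Set.ne_univ_iff_exists_notMem _).mp hAuniv
  have hr : 0 < Metric.infDist x₀ A := by
    rw [hA] at hAne hx₀ ⊢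
    exact (IsClosed.notMem_iff_infDist_pos isClosed_closure hAne).mp hx₀
  set r := Metric.infDist x₀ A with hrdef
  refine ⟨r / 8, by positivity, ?_⟩
  intro x δ hδ
  by_contra hcon
  push_neg at hcon
  -- hcon : ∀ y ∈ ball x δ, ∀ s, dist (Φ s x) (Φ s y) ≤ r / 8
  have hballne : (Metric.ball x δ).Nonempty := ⟨x, Metric.mem_ball_self hδ⟩
  obtain ⟨z, hz, hzball⟩ := hDPT.exists_mem_open Metric.isOpen_ball hballne
  obtain ⟨p, hp, hpball⟩ := hM.exists_mem_open Metric.isOpen_ball hballne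
  have key : ∀ s : S, dist (Φ s z) (Φ s p) ≤ 2 * (r / 8) := by
    intro s
    calc dist (Φ s z) (Φ s p) ≤ dist (Φ s z) (Φ s x) + dist (Φ s x) (Φ s p) :=
          dist_triangle _ _ _
      _ ≤ r / 8 + r / 8 := by
          have h1 := hcon z hzball s
          have h2 := hcon p hpball s
          rw [dist_comm (Φ s z)]
          exact add_le_add h1 h2
      _ = 2 * (r / 8) := by ring
  set B := closure (sgOrbit Φ p) with hB
  have hBc : IsCompact B := hp.1
  -- every point of X is "2ε-shadowed forever" by a point of B
  have shadow : ∀ w : X, ∃ b ∈ B, dist w b ≤ 2 * (r / 8) ∧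
      ∀ u : S, dist (Φ u w) (Φ u b) ≤ 2 * (r / 8) := by
    intro w
    have hw : w ∈ closure (sgOrbit Φ z) := by
      rw [(hz : Dense (sgOrbit Φ z)).closure_eq]; trivial
    rw [mem_closure_iff_seq_limit] at hw
    obtain ⟨f, hf, hft⟩ := hw
    choose g hg using hf
    have hmem : ∀ n, Φ (g n) p ∈ B := fun n => subset_closure ⟨g n, rfl⟩
    obtain ⟨b, hbB, ψ, hψ, hconv⟩ := hBc.tendsto_subseq hmem
    refine ⟨b, hbB, ?_, ?_⟩
    · have hlim : Filter.Tendsto (fun n => dist (f (ψ n)) (Φ (g (ψ n)) p))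
          Filter.atTop (nhds (dist w b)) :=
        Filter.Tendsto.dist (hft.comp hψ.tendsto_atTop) hconv
      refine le_of_tendsto hlim (Filter.Eventually.of_forall fun n => ?_)
      rw [← hg (ψ n)]
      exact key (g (ψ n))
    · intro u
      have h1 : Filter.Tendsto (fun n => Φ u (f (ψ n))) Filter.atTop (nhds (Φ u w)) :=
        ((hcont u).tendsto w).comp (hft.comp hψ.tendsto_atTop)
      have h2 : Filter.Tendsto (fun n => Φ u ((fun n => Φ (g n) p) (ψ n)))
          Filter.atTop (nhds (Φ u b)) := ((hcont u).tendsto b).comp hconv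
      refine le_of_tendsto (Filter.Tendsto.dist h1 h2) (Filter.Eventually.of_forall fun n => ?_)
      have hk := key (u * g (ψ n))
      rw [haction] at hk
      simpa [hg (ψ n)] using hk
  obtain ⟨a, haA⟩ := hAne
  obtain ⟨b, hbB, -, hbfollow⟩ := shadow a
  obtain ⟨b₀, hb₀B, hb₀d, -⟩ := shadow x₀
  -- b₀ lies in the closure of the orbit of b, by minimality of B
  have hcb : closure (sgOrbit Φ b) = B := hp.2 b hbB
  have hb₀cl : b₀ ∈ closure (sgOrbit Φ b) := by rw [hcb]; exact hb₀B
  rw [Metric.mem_closure_iff] at hb₀cl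
  obtain ⟨c, hc, hcd⟩ := hb₀cl (r / 8) (by positivity)
  obtain ⟨u, rfl⟩ := hc
  -- Φ u a stays in A
  have haa : Φ u a ∈ A := by
    have h := hp0.2 a haA
    show Φ u a ∈ closure (sgOrbit Φ p0)
    rw [← h]
    exact subset_closure ⟨u, rfl⟩
  have hub : Metric.infDist (Φ u b) A ≤ 2 * (r / 8) := by
    refine le_trans (Metric.infDist_le_dist_of_mem haa) ?_
    rw [dist_comm]
    exact hbfollow u
  have hlow : Metric.infDist x₀ A ≤ Metric.infDist (Φ u b) A + dist x₀ (Φ u b) :=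
    Metric.infDist_le_infDist_add_dist
  have htri : dist x₀ (Φ u b) ≤ dist x₀ b₀ + dist b₀ (Φ u b) := dist_triangle _ _ _
  rw [← hrdef] at hlow
  linarith
end

section
/- Let S be a semigroup acting on a metric space X by continuous maps Φ_s, each of which is almost open. Assume the set of transitive points is dense (DPT), the system is non-minimal, and the set M⁻¹ = ⋃_{s∈S} Φ_s^{-1}(M) is dense, where M is the set of minimal points. Then the system is sensitive. -/
theorem stmt_9 {S X : Type*} [Semigroup S] [MetricSpace X]
    (Φ : S → X → X) (hcont : ∀ s, Continuous (Φ s))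
    (haction : ∀ s t : S, Φ (s * t) = Φ s ∘ Φ t)
    (hao : ∀ s : S, ∀ U : Set X, IsOpen U → U.Nonempty →
      (interior (Φ s '' U)).Nonempty)
    (hDPT : Dense {x : X | Dense (sgOrbit Φ x)})
    (hnonmin : ¬ ∃ x : X, IsMinimalPoint Φ x ∧ Dense (sgOrbit Φ x))
    (hMinv : Dense (⋃ s : S, Φ s ⁻¹' {x : X | IsMinimalPoint Φ x})) :
    ∃ ε > 0, ∀ x : X, ∀ δ > 0, ∃ y ∈ Metric.ball x δ,
      ∃ s : S, dist (Φ s x) (Φ s y) > ε := by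
  rcases isEmpty_or_nonempty X with hX | hX
  · exact ⟨1, one_pos, fun x => (IsEmpty.false x).elim⟩
  -- a minimal point exists; let K be its orbit closure
  obtain ⟨w₀, hw₀⟩ := hMinv.nonempty
  rw [Set.mem_iUnion] at hw₀
  obtain ⟨s₁, hs₁⟩ := hw₀
  have hm₀ : IsMinimalPoint Φ (Φ s₁ w₀) := hs₁
  set m₀ := Φ s₁ w₀ with hm₀def
  set K := closure (sgOrbit Φ m₀) with hKdef
  have horb₀ : (sgOrbit Φ m₀).Nonempty := ⟨Φ s₁ m₀, s₁, rfl⟩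
  have hKne : K.Nonempty := horb₀.closure
  have hminK : ∀ y ∈ K, closure (sgOrbit Φ y) = K := hm₀.2
  have hKuniv : K ≠ Set.univ := by
    intro h
    obtain ⟨y, hy⟩ := hKne
    refine hnonmin ⟨y, ⟨?_, ?_⟩, ?_⟩
    · rw [hminK y hy]; exact hm₀.1
    · intro z hz
      rw [hminK y hy] at hz ⊢
      exact hminK z hz
    · rw [dense_iff_closure_eq, hminK y hy, h]
  obtain ⟨x₀, hx₀⟩ := (Set.ne_univ_iff_exists_notMem K).mp hKuniv
  have hr : 0 < Metric.infDist x₀ K :=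
    (IsClosed.notMem_iff_infDist_pos isClosed_closure hKne).mp hx₀
  set r := Metric.infDist x₀ K with hrdef
  refine ⟨r / 8, by positivity, ?_⟩
  intro x δ hδ
  by_contra hcon
  push_neg at hcon
  set ε := r / 8 with hεdef
  have hε : 0 < ε := by positivity
  -- pairwise stability of the ball
  have hpair : ∀ y ∈ Metric.ball x δ, ∀ y' ∈ Metric.ball x δ, ∀ s : S,
      dist (Φ s y) (Φ s y') ≤ 2 * ε := by
    intro y hy y' hy' s
    calc dist (Φ s y) (Φ s y') ≤ dist (Φ s y) (Φ s x) + dist (Φ s x) (Φ s y') :=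
          dist_triangle _ _ _
      _ ≤ ε + ε := add_le_add (by rw [dist_comm]; exact hcon y hy s) (hcon y' hy' s)
      _ = 2 * ε := by ring
  have hball : (Metric.ball x δ).Nonempty := ⟨x, Metric.mem_ball_self hδ⟩
  -- a point of the ball mapped to a minimal point
  obtain ⟨p, hpmem, hpball⟩ := hMinv.exists_mem_open Metric.isOpen_ball hball
  rw [Set.mem_iUnion] at hpmem
  obtain ⟨σ, hσ⟩ := hpmem
  have hm : IsMinimalPoint Φ (Φ σ p) := hσ
  set m := Φ σ p with hmdef
  set Y := closure (sgOrbit Φ m) with hYdef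
  have hYcomp : IsCompact Y := hm.1
  have hYmin : ∀ y ∈ Y, closure (sgOrbit Φ y) = Y := hm.2
  -- a transitive point in the image of the ball
  obtain ⟨w, hwDPT, hwInt⟩ := hDPT.exists_mem_open isOpen_interior
      (hao σ (Metric.ball x δ) Metric.isOpen_ball hball)
  obtain ⟨u', hu'ball, hwu'⟩ := interior_subset hwInt
  have hwdense : Dense (sgOrbit Φ w) := hwDPT
  -- w is 2ε-shadowed by the orbit of the minimal point m
  have shadow : ∀ t : S, dist (Φ t w) (Φ t m) ≤ 2 * ε := by
    intro t
    have h1 : Φ t w = Φ (t * σ) u' := by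
      rw [haction t σ, Function.comp_apply, hwu']
    have h2 : Φ t m = Φ (t * σ) p := by
      rw [haction t σ, Function.comp_apply]
    rw [h1, h2]
    exact hpair u' hu'ball p hpball (t * σ)
  -- steer w near x₀; get a point ya of Y near x₀
  obtain ⟨b, hbmem, hbd⟩ := Metric.mem_closure_iff.mp (hwdense x₀) ε hε
  obtain ⟨a, rfl⟩ := hbmem
  set ya := Φ a m with hyadef
  have hya_mem : ya ∈ Y := subset_closure ⟨a, rfl⟩
  have hya_x₀ : dist ya x₀ < 3 * ε := by
    calc dist ya x₀ ≤ dist ya (Φ a w) + dist (Φ a w) x₀ := dist_triangle _ _ _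
      _ < 2 * ε + ε := add_lt_add_of_le_of_lt
          (by rw [dist_comm]; exact shadow a) (by rw [dist_comm]; exact hbd)
      _ = 3 * ε := by ring
  -- finite subcover of Y by return-time preimages of ball ya ε
  have hcover : Y ⊆ ⋃ t : S, Φ t ⁻¹' Metric.ball ya ε := by
    intro y hy
    have hya' : ya ∈ closure (sgOrbit Φ y) := (hYmin y hy).symm ▸ hya_mem
    obtain ⟨b, hbmem, hbd⟩ := Metric.mem_closure_iff.mp hya' ε hε
    obtain ⟨t, rfl⟩ := hbmem
    exact Set.mem_iUnion.mpr ⟨t, by simpa [Metric.mem_ball, dist_comm] using hbd⟩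
  obtain ⟨F, hF⟩ := hYcomp.elim_finite_subcover _
      (fun t => Metric.isOpen_ball.preimage (hcont t)) hcover
  obtain ⟨k, hk⟩ := hKne
  -- neighborhood of k whose F-images stay ε-near K
  set W := ⋂ t ∈ F, Φ t ⁻¹' Metric.ball (Φ t k) ε with hWdef
  have hWopen : IsOpen W :=
    isOpen_biInter_finset fun t _ => Metric.isOpen_ball.preimage (hcont t)
  have hkW : k ∈ W := Set.mem_iInter₂.mpr fun t _ => Metric.mem_ball_self hε
  obtain ⟨ρ, hρpos, hρ⟩ := Metric.isOpen_iff.mp hWopen k hkW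
  -- steer w into that neighborhood
  obtain ⟨b, hbmem2, hbd2⟩ := Metric.mem_closure_iff.mp (hwdense k) ρ hρpos
  obtain ⟨u, rfl⟩ := hbmem2
  have huW : Φ u w ∈ W := hρ (by rw [Metric.mem_ball, dist_comm]; exact hbd2)
  have hum : Φ u m ∈ Y := subset_closure ⟨u, rfl⟩
  obtain ⟨t, htF, htV⟩ := Set.mem_iUnion₂.mp (hF hum)
  have htV' : dist (Φ t (Φ u m)) ya < ε := htV
  have hA : dist (Φ t (Φ u m)) x₀ < 4 * ε := by
    calc dist (Φ t (Φ u m)) x₀ ≤ dist (Φ t (Φ u m)) ya + dist ya x₀ := dist_triangle _ _ _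
      _ < ε + 3 * ε := add_lt_add htV' hya_x₀
      _ = 4 * ε := by ring
  have hBA : dist (Φ t (Φ u w)) (Φ t (Φ u m)) ≤ 2 * ε := by
    have h1 : Φ t (Φ u w) = Φ (t * u) w := by rw [haction t u, Function.comp_apply]
    have h2 : Φ t (Φ u m) = Φ (t * u) m := by rw [haction t u, Function.comp_apply]
    rw [h1, h2]
    exact shadow (t * u)
  have hB : dist (Φ t (Φ u w)) x₀ < 6 * ε := by
    calc dist (Φ t (Φ u w)) x₀ ≤ dist (Φ t (Φ u w)) (Φ t (Φ u m)) + dist (Φ t (Φ u m)) x₀ :=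
          dist_triangle _ _ _
      _ < 2 * ε + 4 * ε := add_lt_add_of_le_of_lt hBA hA
      _ = 6 * ε := by ring
  have hBk : dist (Φ t (Φ u w)) (Φ t k) < ε := Set.mem_iInter₂.mp huW t htF
  have hKt : Φ t k ∈ K := by
    have h1 : Φ t k ∈ closure (sgOrbit Φ k) := subset_closure ⟨t, rfl⟩
    rwa [hminK k hk] at h1
  have hrle : r ≤ dist x₀ (Φ t k) := Metric.infDist_le_dist_of_mem hKt
  have htri : dist x₀ (Φ t k) ≤ dist (Φ t (Φ u w)) x₀ + dist (Φ t (Φ u w)) (Φ t k) := by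
    rw [dist_comm (Φ t (Φ u w)) x₀]
    exact dist_triangle _ _ _
  have : r < 7 * ε := by linarith
  rw [hεdef] at this
  linarith
end
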